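/- Let n ≥ 3, p ∈ (1,2], β > 0, a ∈ ℝ with 0 ≤ −a < pβ < n, and q > (n+a)(p−1)/(n−pβ). Set t = (pβ+a)/(q−p+1) and let c > 0. Then for u(x) = c|x|^{−t}, the Wolff potential x ↦ W_{β,p}(|·|^a u^q)(x) is finite and positive on ℝ^n \ {0}, and there exists a double bounded function R on ℝ^n \ {0} such that u(x) = R(x)·W_{β,p}(|·|^a u^q)(x) for all x ≠ 0; equivalently, there exist constants 0 < c₁ ≤ c₂ with c₁·W_{β,p}(|·|^a u^q)(x) ≤ u(x) ≤ c₂·W_{β,p}(|·|^a u^q)(x) for all x ≠ 0. -/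

import Mathlib

/-!
Put `σ = a - t q`. The density is `|y|^a u^q = c^q |y|^σ`, and `t (q - p + 1) = pβ + a` turns into
`(pβ + σ) / (p - 1) = -t`. Substituting `r ↦ λ r`, `y ↦ λ y` in the Wolff potential shows that
`W(|·|^σ)` is homogeneous of degree `(pβ + σ) / (p - 1)`, and it is invariant under rotations, so
`W(|·|^σ)(x) = K |x|^{-t}` where `K` is its value at a unit vector, and
`c₁ = c₂ = c / (c^{q/(p-1)} K)`. It remains to see `0 < K < ∞`. At a unit vector the integral of
`|y|^σ` over the ball of radius `r` is `O(r^n)` for `r < 1/2`, where the ball stays away from the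
origin, and `O(r^{n+σ})` for larger `r`, by local integrability (`σ > -n`). So the integrand of the
potential is `O(r^{pβ/(p-1) - 1})` near `0` and `O(r^{-t-1})` at infinity, both integrable.
-/

open MeasureTheory Metric Set Filter ENNReal

/-- The Wolff potential `W_{β,p}(f)(x)`. -/
noncomputable def wolff (n : ℕ) (β p : ℝ) (f : EuclideanSpace ℝ (Fin n) → ℝ)
    (x : EuclideanSpace ℝ (Fin n)) : ℝ≥0∞ :=
  ∫⁻ t in Set.Ioi (0 : ℝ),
    ((ENNReal.ofReal (t ^ (p * β - (n : ℝ))) *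
        ∫⁻ y in Metric.ball x t, ENNReal.ofReal (f y)) ^ (1 / (p - 1))) /
      ENNReal.ofReal t

/-- `R` is double bounded: `1/C ≤ R x ≤ C` for some `C > 0`. -/
def DoubleBounded {α : Type*} (R : α → ℝ) : Prop :=
  ∃ C : ℝ, 0 < C ∧ ∀ x, 1 / C ≤ R x ∧ R x ≤ C

/-- `u` is a positive (continuous) solution of the integral equation
`u(x) = R(x)·W_{β,p}(|·|^a u^q)(x)`, with finite Wolff potential. -/
def IsIESolutionWith (n : ℕ) (β p a q : ℝ)
    (R u : EuclideanSpace ℝ (Fin n) → ℝ) : Prop :=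
  Continuous u ∧ (∀ x, 0 < u x) ∧
  ∀ x, wolff n β p (fun y => ‖y‖ ^ a * u y ^ q) x ≠ ∞ ∧
    u x = R x * (wolff n β p (fun y => ‖y‖ ^ a * u y ^ q) x).toReal

theorem lintegral_comp_mul_left_Ioi (g : ℝ → ℝ≥0∞) (a : ℝ) {b : ℝ} (hb : 0 < b) :
    ENNReal.ofReal b * ∫⁻ x in Ioi a, g (b * x) = ∫⁻ x in Ioi (b * a), g x := by
  have hf : MeasurableEmbedding (b * ·) := (Homeomorph.mulLeft₀ b hb.ne').measurableEmbedding
  have := (hf.measurable.measurePreserving volume).setLIntegral_comp_preimage_emb hf g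
    (Ioi (b * a))
  rw [preimage_const_mul_Ioi₀ _ hb, mul_div_cancel_left₀ _ hb.ne',
    Real.map_volume_mul_left hb.ne', setLIntegral_smul_measure, abs_of_pos (inv_pos.2 hb)] at this
  rw [this, smul_eq_mul, ← mul_assoc, ← ENNReal.ofReal_mul hb.le, mul_inv_cancel₀ hb.ne',
    ENNReal.ofReal_one, one_mul]

theorem setLIntegral_ball_smul {E : Type*} [NormedAddCommGroup E] [NormedSpace ℝ E]
    [MeasurableSpace E] [BorelSpace E] [FiniteDimensional ℝ E] (μ : Measure E)
    [μ.IsAddHaarMeasure] (f : E → ℝ≥0∞) (x : E) (r : ℝ) {l : ℝ} (hl : 0 < l) :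
    ∫⁻ y in ball (l • x) (l * r), f y ∂μ
      = ENNReal.ofReal (l ^ Module.finrank ℝ E) * ∫⁻ z in ball x r, f (l • z) ∂μ := by
  have hf : MeasurableEmbedding (l • · : E → E) :=
    (Homeomorph.smulOfNeZero l hl.ne').measurableEmbedding
  have hpre : (l • · : E → E) ⁻¹' ball (l • x) (l * r) = ball x r := by
    ext z
    simp only [mem_preimage, mem_ball, dist_eq_norm, ← smul_sub, norm_smul, Real.norm_eq_abs,
      abs_of_pos hl, mul_lt_mul_iff_right₀ hl]
  have hld : 0 < l ^ Module.finrank ℝ E := pow_pos hl _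
  have := (hf.measurable.measurePreserving μ).setLIntegral_comp_preimage_emb hf f
    (ball (l • x) (l * r))
  rw [hpre, Measure.map_addHaar_smul μ hl.ne', setLIntegral_smul_measure,
    abs_of_pos (inv_pos.2 hld)] at this
  rw [this, smul_eq_mul, ← mul_assoc, ← ENNReal.ofReal_mul hld.le, mul_inv_cancel₀ hld.ne',
    ENNReal.ofReal_one, one_mul]

theorem setLIntegral_ball_comp_linearIsometryEquiv {E : Type*} [NormedAddCommGroup E]
    [InnerProductSpace ℝ E] [FiniteDimensional ℝ E] [MeasurableSpace E] [BorelSpace E]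
    (e : E ≃ₗᵢ[ℝ] E) (f : E → ℝ≥0∞) (x : E) (r : ℝ) :
    ∫⁻ z in ball x r, f (e z) = ∫⁻ y in ball (e x) r, f y := by
  have := e.measurePreserving.setLIntegral_comp_preimage_emb
    e.toHomeomorph.measurableEmbedding f (ball (e x) r)
  rwa [e.preimage_ball, e.symm_apply_apply] at this

section Wolff

variable {n : ℕ} {β p : ℝ}

noncomputable def wolffIntegrand (n : ℕ) (β p : ℝ) (f : EuclideanSpace ℝ (Fin n) → ℝ)
    (x : EuclideanSpace ℝ (Fin n)) (r : ℝ) : ℝ≥0∞ :=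
  ((ENNReal.ofReal (r ^ (p * β - (n : ℝ))) * ∫⁻ y in ball x r, ENNReal.ofReal (f y)) ^
    (1 / (p - 1))) / ENNReal.ofReal r

theorem wolff_eq_lintegral_wolffIntegrand (f : EuclideanSpace ℝ (Fin n) → ℝ)
    (x : EuclideanSpace ℝ (Fin n)) :
    wolff n β p f x = ∫⁻ r in Ioi 0, wolffIntegrand n β p f x r := rfl

theorem measurable_wolffIntegrand (f : EuclideanSpace ℝ (Fin n) → ℝ)
    (x : EuclideanSpace ℝ (Fin n)) : Measurable (wolffIntegrand n β p f x) := by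
  have hmono : Monotone fun r : ℝ => ∫⁻ y in ball x r, ENNReal.ofReal (f y) :=
    fun _ _ h => lintegral_mono_set (ball_subset_ball h)
  exact (((measurable_id.pow_const _).ennreal_ofReal.mul hmono.measurable).pow_const _).div
    measurable_id.ennreal_ofReal

theorem wolff_const_mul (hp : 1 ≤ p) {k : ℝ} (hk : 0 ≤ k) (f : EuclideanSpace ℝ (Fin n) → ℝ)
    (x : EuclideanSpace ℝ (Fin n)) :
    wolff n β p (fun y => k * f y) x = ENNReal.ofReal k ^ (1 / (p - 1)) * wolff n β p f x := by
  have he : 0 ≤ 1 / (p - 1) := one_div_nonneg.2 (sub_nonneg.2 hp)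
  rw [wolff, wolff, ← lintegral_const_mul' _ _
    (ENNReal.rpow_ne_top_of_nonneg he ENNReal.ofReal_ne_top)]
  refine lintegral_congr fun r => ?_
  simp_rw [ENNReal.ofReal_mul hk]
  rw [lintegral_const_mul' _ _ ENNReal.ofReal_ne_top, mul_left_comm,
    ENNReal.mul_rpow_of_nonneg _ _ he, mul_div_assoc]

theorem wolff_comp_linearIsometryEquiv
    (e : EuclideanSpace ℝ (Fin n) ≃ₗᵢ[ℝ] EuclideanSpace ℝ (Fin n))
    (f : EuclideanSpace ℝ (Fin n) → ℝ) (x : EuclideanSpace ℝ (Fin n)) :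
    wolff n β p (f ∘ e) x = wolff n β p f (e x) := by
  simp only [wolff, Function.comp_apply,
    setLIntegral_ball_comp_linearIsometryEquiv e (fun y => ENNReal.ofReal (f y))]

theorem wolff_smul (hp : 1 ≤ p) (f : EuclideanSpace ℝ (Fin n) → ℝ)
    (x : EuclideanSpace ℝ (Fin n)) {l : ℝ} (hl : 0 < l) :
    wolff n β p f (l • x)
      = ENNReal.ofReal (l ^ (p * β)) ^ (1 / (p - 1)) * wolff n β p (fun z => f (l • z)) x := by
  have he : 0 ≤ 1 / (p - 1) := one_div_nonneg.2 (sub_nonneg.2 hp)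
  have hl0 : ENNReal.ofReal l ≠ 0 := (ENNReal.ofReal_pos.2 hl).ne'
  have key : ∀ s ∈ Ioi (0 : ℝ), ENNReal.ofReal l * wolffIntegrand n β p f (l • x) (l * s)
      = ENNReal.ofReal (l ^ (p * β)) ^ (1 / (p - 1)) *
          wolffIntegrand n β p (fun z => f (l • z)) x s := by
    intro s (hs : 0 < s)
    have hpow : ENNReal.ofReal ((l * s) ^ (p * β - n)) * ENNReal.ofReal (l ^ n)
        = ENNReal.ofReal (l ^ (p * β)) * ENNReal.ofReal (s ^ (p * β - n)) := by
      rw [Real.mul_rpow hl.le hs.le, ← ENNReal.ofReal_mul (by positivity),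
        ← ENNReal.ofReal_mul (by positivity), mul_right_comm, ← Real.rpow_natCast,
        ← Real.rpow_add hl, sub_add_cancel]
    rw [wolffIntegrand, wolffIntegrand, setLIntegral_ball_smul volume _ x s hl,
      finrank_euclideanSpace_fin, ← mul_assoc, hpow, mul_assoc, ENNReal.mul_rpow_of_nonneg _ _ he,
      ENNReal.ofReal_mul hl.le, mul_div_assoc, mul_left_comm, ← mul_div_assoc,
      ENNReal.mul_div_mul_left _ _ hl0 ENNReal.ofReal_ne_top]
  calc wolff n β p f (l • x)
      = ENNReal.ofReal l * ∫⁻ s in Ioi 0, wolffIntegrand n β p f (l • x) (l * s) := by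
        rw [lintegral_comp_mul_left_Ioi _ 0 hl, mul_zero]; rfl
    _ = ∫⁻ s in Ioi 0, ENNReal.ofReal l * wolffIntegrand n β p f (l • x) (l * s) :=
        (lintegral_const_mul' _ _ ENNReal.ofReal_ne_top).symm
    _ = ∫⁻ s in Ioi 0, ENNReal.ofReal (l ^ (p * β)) ^ (1 / (p - 1)) *
          wolffIntegrand n β p (fun z => f (l • z)) x s :=
        setLIntegral_congr_fun measurableSet_Ioi key
    _ = _ := lintegral_const_mul' _ _ (ENNReal.rpow_ne_top_of_nonneg he ENNReal.ofReal_ne_top)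

theorem wolff_pos (hp : 1 ≤ p) {f : EuclideanSpace ℝ (Fin n) → ℝ} (hf : Measurable f)
    (hpos : ∀ᵐ y, 0 < f y) (x : EuclideanSpace ℝ (Fin n)) : 0 < wolff n β p f x := by
  have hball : ∀ r > 0, 0 < ∫⁻ y in ball x r, ENNReal.ofReal (f y) := by
    intro r hr
    have hnull : volume (Function.support fun y => ENNReal.ofReal (f y))ᶜ = 0 :=
      ae_iff.1 (hpos.mono fun y hy => ENNReal.ofReal_pos.2 hy |>.ne')
    rw [setLIntegral_pos_iff hf.ennreal_ofReal, inter_comm, measure_inter_conull hnull]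
    exact measure_ball_pos volume x hr
  have hG : ∀ r ∈ Ioi (0 : ℝ), 0 < wolffIntegrand n β p f x r := fun r (hr : 0 < r) =>
    ENNReal.div_pos (ENNReal.rpow_pos_of_nonneg (ENNReal.mul_pos
      (ENNReal.ofReal_pos.2 (Real.rpow_pos_of_pos hr _)).ne' (hball r hr).ne')
      (one_div_nonneg.2 (sub_nonneg.2 hp))).ne' ENNReal.ofReal_ne_top
  rw [wolff_eq_lintegral_wolffIntegrand, setLIntegral_pos_iff (measurable_wolffIntegrand f x),
    inter_eq_right.2 fun r hr => Function.mem_support.2 (hG r hr).ne', Real.volume_Ioi]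
  exact ENNReal.zero_lt_top

theorem wolffIntegrand_le (hp : 1 ≤ p) {f : EuclideanSpace ℝ (Fin n) → ℝ}
    {x : EuclideanSpace ℝ (Fin n)} {A : ℝ≥0∞} {γ r : ℝ} (hr : 0 < r)
    (h : ∫⁻ y in ball x r, ENNReal.ofReal (f y) ≤ A * ENNReal.ofReal (r ^ γ)) :
    wolffIntegrand n β p f x r
      ≤ A ^ (1 / (p - 1)) * ENNReal.ofReal (r ^ ((p * β - n + γ) / (p - 1) - 1)) := by
  have he : 0 ≤ 1 / (p - 1) := one_div_nonneg.2 (sub_nonneg.2 hp)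
  have hpow : ENNReal.ofReal (r ^ (p * β - n)) * (A * ENNReal.ofReal (r ^ γ))
      = A * ENNReal.ofReal (r ^ (p * β - n + γ)) := by
    rw [mul_left_comm, ← ENNReal.ofReal_mul (by positivity), ← Real.rpow_add hr]
  calc wolffIntegrand n β p f x r
      ≤ (A * ENNReal.ofReal (r ^ (p * β - n + γ))) ^ (1 / (p - 1)) / ENNReal.ofReal r := by
        rw [← hpow]
        exact ENNReal.div_le_div_right (ENNReal.rpow_le_rpow (mul_le_mul_right h _) he) _
    _ = _ := by
        rw [ENNReal.mul_rpow_of_nonneg _ _ he, ENNReal.ofReal_rpow_of_pos (by positivity),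
          mul_div_assoc, ← ENNReal.ofReal_div_of_pos hr, ← Real.rpow_mul hr.le, mul_one_div,
          Real.rpow_sub_one hr.ne']

theorem wolff_ne_top_of_setLIntegral_ball_le (hp : 1 < p) {f : EuclideanSpace ℝ (Fin n) → ℝ}
    {x : EuclideanSpace ℝ (Fin n)} {ρ : ℝ} (hρ : 0 < ρ) {A B : ℝ≥0∞} (hA : A ≠ ∞) (hB : B ≠ ∞)
    {γ₀ γ₁ : ℝ} (hγ₀ : 0 < p * β - n + γ₀) (hγ₁ : p * β - n + γ₁ < 0)
    (h₀ : ∀ r ∈ Ioo 0 ρ, ∫⁻ y in ball x r, ENNReal.ofReal (f y) ≤ A * ENNReal.ofReal (r ^ γ₀))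
    (h₁ : ∀ r ∈ Ici ρ, ∫⁻ y in ball x r, ENNReal.ofReal (f y) ≤ B * ENNReal.ofReal (r ^ γ₁)) :
    wolff n β p f x ≠ ∞ := by
  have hp0 : 0 < p - 1 := sub_pos.2 hp
  have hpiece : ∀ (S : Set ℝ) (C : ℝ≥0∞) (s : ℝ), MeasurableSet S → C ≠ ∞ →
      IntegrableOn (fun r => r ^ s) S →
      (∀ r ∈ S, wolffIntegrand n β p f x r ≤ C * ENNReal.ofReal (r ^ s)) →
      ∫⁻ r in S, wolffIntegrand n β p f x r ≠ ∞ := by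
    intro S C s hS hC hint hle
    refine ne_top_of_le_ne_top ?_ (setLIntegral_mono' hS hle)
    rw [lintegral_const_mul' _ _ hC]
    exact ENNReal.mul_ne_top hC hint.lintegral_lt_top.ne
  have hsplit : Ioi (0 : ℝ) ⊆ Ioo 0 ρ ∪ Ici ρ := fun r (hr : 0 < r) =>
    (lt_or_ge r ρ).imp (fun h => ⟨hr, h⟩) id
  refine ne_top_of_le_ne_top (ENNReal.add_ne_top.2 ⟨?_, ?_⟩)
    ((lintegral_mono_set hsplit).trans (lintegral_union_le _ _ _))
  · refine hpiece _ _ _ measurableSet_Ioo (ENNReal.rpow_ne_top_of_nonneg (by positivity) hA) ?_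
      fun r hr => wolffIntegrand_le hp.le hr.1 (h₀ r hr)
    rw [intervalIntegral.integrableOn_Ioo_rpow_iff hρ]
    have : 0 < (p * β - n + γ₀) / (p - 1) := div_pos hγ₀ hp0
    linarith
  · refine hpiece _ _ _ measurableSet_Ici (ENNReal.rpow_ne_top_of_nonneg (by positivity) hB) ?_
      fun r (hr : ρ ≤ r) => wolffIntegrand_le hp.le (hρ.trans_le hr) (h₁ r hr)
    rw [integrableOn_Ici_iff_integrableOn_Ioi]
    refine integrableOn_Ioi_rpow_of_lt ?_ hρ
    have : (p * β - n + γ₁) / (p - 1) < 0 := div_neg_of_neg_of_pos hγ₁ hp0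
    linarith

end Wolff

section NormRpow

variable {E : Type*} [NormedAddCommGroup E] [NormedSpace ℝ E] [MeasurableSpace E] [BorelSpace E]
  [FiniteDimensional ℝ E] (μ : Measure E) [μ.IsAddHaarMeasure] {σ : ℝ}

theorem integrableOn_ball_zero_norm_rpow [Nontrivial E]
    (hσ : -(Module.finrank ℝ E : ℝ) < σ) (r : ℝ) :
    IntegrableOn (fun y => ‖y‖ ^ σ) (ball (0 : E) r) μ := by
  rcases le_or_gt r 0 with hr | hr
  · rw [ball_eq_empty.2 hr]
    exact integrableOn_empty
  have hd : 1 ≤ Module.finrank ℝ E := Module.finrank_pos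
  rw [integrableOn_fun_norm_addHaar μ (f := fun y => y ^ σ)]
  refine ((intervalIntegral.integrableOn_Ioo_rpow_iff (s := (Module.finrank ℝ E - 1 : ℝ) + σ)
    hr).2 (by linarith)).congr_fun
    (fun y (hy : y ∈ Ioo 0 r) => ?_) measurableSet_Ioo
  rw [smul_eq_mul, ← Real.rpow_natCast, Nat.cast_sub hd, Nat.cast_one, ← Real.rpow_add hy.1]

theorem setLIntegral_ball_zero_norm_rpow {R : ℝ} (hR : 0 < R) :
    ∫⁻ y in ball (0 : E) R, ENNReal.ofReal (‖y‖ ^ σ) ∂μ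
      = ENNReal.ofReal (R ^ (Module.finrank ℝ E + σ)) *
          ∫⁻ y in ball (0 : E) 1, ENNReal.ofReal (‖y‖ ^ σ) ∂μ := by
  have := setLIntegral_ball_smul μ (fun y => ENNReal.ofReal (‖y‖ ^ σ)) 0 1 hR
  rw [smul_zero, mul_one] at this
  simp_rw [this, norm_smul, Real.norm_eq_abs, abs_of_pos hR, Real.mul_rpow hR.le (norm_nonneg _),
    ENNReal.ofReal_mul (Real.rpow_nonneg hR.le σ)]
  rw [lintegral_const_mul' _ _ ENNReal.ofReal_ne_top, ← mul_assoc,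
    ← ENNReal.ofReal_mul (by positivity), ← Real.rpow_natCast, ← Real.rpow_add hR]

theorem setLIntegral_ball_norm_rpow_le_of_lt_half (hσ : σ ≤ 0) {x₀ : E} (hx₀ : ‖x₀‖ = 1)
    {r : ℝ} (hr₀ : 0 < r) (hr : r < 1 / 2) :
    ∫⁻ y in ball x₀ r, ENNReal.ofReal (‖y‖ ^ σ) ∂μ
      ≤ ENNReal.ofReal ((1 / 2) ^ σ) * μ (ball 0 1) *
          ENNReal.ofReal (r ^ (Module.finrank ℝ E : ℝ)) := by
  have hle : ∀ y ∈ ball x₀ r, ENNReal.ofReal (‖y‖ ^ σ) ≤ ENNReal.ofReal ((1 / 2) ^ σ) := by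
    intro y hy
    have hy' : 1 / 2 ≤ ‖y‖ := by
      have := norm_sub_norm_le x₀ y
      rw [hx₀, norm_sub_rev] at this
      linarith [mem_ball_iff_norm.1 hy]
    exact ENNReal.ofReal_le_ofReal (Real.rpow_le_rpow_of_nonpos (by norm_num) hy' hσ)
  calc ∫⁻ y in ball x₀ r, ENNReal.ofReal (‖y‖ ^ σ) ∂μ
      ≤ ∫⁻ _ in ball x₀ r, ENNReal.ofReal ((1 / 2) ^ σ) ∂μ :=
        setLIntegral_mono' measurableSet_ball hle
    _ = _ := by
        rw [setLIntegral_const, Measure.addHaar_ball_of_pos μ _ hr₀, Real.rpow_natCast]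
        ring

theorem setLIntegral_ball_norm_rpow_le_of_half_le {x₀ : E} (hx₀ : ‖x₀‖ = 1) {r : ℝ}
    (hr : 1 / 2 ≤ r) :
    ∫⁻ y in ball x₀ r, ENNReal.ofReal (‖y‖ ^ σ) ∂μ
      ≤ ENNReal.ofReal (3 ^ (Module.finrank ℝ E + σ)) *
          (∫⁻ y in ball (0 : E) 1, ENNReal.ofReal (‖y‖ ^ σ) ∂μ) *
          ENNReal.ofReal (r ^ (Module.finrank ℝ E + σ)) := by
  have hsub : ball x₀ r ⊆ ball 0 (3 * r) := fun y hy => by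
    rw [mem_ball_zero_iff]
    linarith [norm_le_norm_add_norm_sub' y x₀, mem_ball_iff_norm.1 hy]
  calc ∫⁻ y in ball x₀ r, ENNReal.ofReal (‖y‖ ^ σ) ∂μ
      ≤ ∫⁻ y in ball 0 (3 * r), ENNReal.ofReal (‖y‖ ^ σ) ∂μ := lintegral_mono_set hsub
    _ = _ := by
        rw [setLIntegral_ball_zero_norm_rpow μ (by linarith), Real.mul_rpow (by norm_num)
          (by linarith), ENNReal.ofReal_mul (by positivity)]
        ring

end NormRpow

section WolffNormRpow

variable {n : ℕ} {β p σ : ℝ}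

theorem wolff_norm_rpow_pos (hn : 0 < n) (hp : 1 ≤ p) (x : EuclideanSpace ℝ (Fin n)) :
    0 < wolff n β p (fun y => ‖y‖ ^ σ) x := by
  have : Nonempty (Fin n) := ⟨⟨0, hn⟩⟩
  have hne : ∀ᵐ y : EuclideanSpace ℝ (Fin n), y ≠ 0 := compl_mem_ae_iff.2 (measure_singleton 0)
  exact wolff_pos hp (measurable_norm.pow_const σ)
    (hne.mono fun y hy => Real.rpow_pos_of_pos (norm_pos_iff.2 hy) σ) x

theorem wolff_norm_rpow_ne_top (hp : 1 < p) (hσ : -(n : ℝ) < σ) (hpβ : 0 < p * β)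
    (hpβσ : p * β + σ < 0) {x₀ : EuclideanSpace ℝ (Fin n)} (hx₀ : ‖x₀‖ = 1) :
    wolff n β p (fun y => ‖y‖ ^ σ) x₀ ≠ ∞ := by
  have : Nontrivial (EuclideanSpace ℝ (Fin n)) :=
    nontrivial_of_ne x₀ 0 (norm_ne_zero_iff.1 (by rw [hx₀]; exact one_ne_zero))
  have hM := ((integrableOn_ball_zero_norm_rpow volume (σ := σ)
    (by rwa [finrank_euclideanSpace_fin]) 1).lintegral_lt_top).ne
  have h₀ := fun r (hr : r ∈ Ioo (0 : ℝ) (1 / 2)) =>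
    setLIntegral_ball_norm_rpow_le_of_lt_half volume (σ := σ) (by linarith) hx₀ hr.1 hr.2
  have h₁ := fun r (hr : r ∈ Ici (1 / 2 : ℝ)) =>
    setLIntegral_ball_norm_rpow_le_of_half_le volume (σ := σ) hx₀ hr
  simp only [finrank_euclideanSpace_fin] at h₀ h₁
  exact wolff_ne_top_of_setLIntegral_ball_le hp (by norm_num)
    (ENNReal.mul_ne_top ENNReal.ofReal_ne_top measure_ball_lt_top.ne)
    (ENNReal.mul_ne_top ENNReal.ofReal_ne_top hM) (by linarith) (by linarith) h₀ h₁

theorem wolff_norm_rpow_smul (hp : 1 ≤ p) (x : EuclideanSpace ℝ (Fin n)) {l : ℝ} (hl : 0 < l) :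
    wolff n β p (fun y => ‖y‖ ^ σ) (l • x)
      = ENNReal.ofReal (l ^ (p * β + σ)) ^ (1 / (p - 1)) * wolff n β p (fun y => ‖y‖ ^ σ) x := by
  have hf : (fun z : EuclideanSpace ℝ (Fin n) => ‖l • z‖ ^ σ) = fun z => l ^ σ * ‖z‖ ^ σ := by
    funext z
    rw [norm_smul, Real.norm_eq_abs, abs_of_pos hl, Real.mul_rpow hl.le (norm_nonneg z)]
  rw [wolff_smul hp _ x hl, hf, wolff_const_mul hp (by positivity), ← mul_assoc,
    ← ENNReal.mul_rpow_of_nonneg _ _ (one_div_nonneg.2 (sub_nonneg.2 hp)),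
    ← ENNReal.ofReal_mul (by positivity), ← Real.rpow_add hl]

theorem wolff_norm_rpow_eq_of_norm_eq {x x' : EuclideanSpace ℝ (Fin n)} (h : ‖x‖ = ‖x'‖) :
    wolff n β p (fun y => ‖y‖ ^ σ) x = wolff n β p (fun y => ‖y‖ ^ σ) x' := by
  let e := (ℝ ∙ (x - x'))ᗮ.reflection
  have hf : (fun y : EuclideanSpace ℝ (Fin n) => ‖y‖ ^ σ) ∘ e = fun y => ‖y‖ ^ σ :=
    funext fun y => by rw [Function.comp_apply, e.norm_map]
  have := wolff_comp_linearIsometryEquiv (β := β) (p := p) e (fun y => ‖y‖ ^ σ) x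
  rwa [hf, Submodule.reflection_sub h] at this

theorem wolff_norm_rpow_eq_norm_rpow_mul (hp : 1 ≤ p) {x x₀ : EuclideanSpace ℝ (Fin n)}
    (hx : x ≠ 0) (hx₀ : ‖x₀‖ = 1) :
    wolff n β p (fun y => ‖y‖ ^ σ) x
      = ENNReal.ofReal (‖x‖ ^ (p * β + σ)) ^ (1 / (p - 1)) * wolff n β p (fun y => ‖y‖ ^ σ) x₀ := by
  have hx' : 0 < ‖x‖ := norm_pos_iff.2 hx
  conv_lhs => rw [← smul_inv_smul₀ hx'.ne' x]
  have hunit : ‖‖x‖⁻¹ • x‖ = ‖x₀‖ := by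
    rw [norm_smul, norm_inv, norm_norm, inv_mul_cancel₀ hx'.ne', hx₀]
  rw [wolff_norm_rpow_smul hp _ hx', wolff_norm_rpow_eq_of_norm_eq hunit]

theorem exists_wolff_norm_rpow_eq_mul (hn : 0 < n) (hp : 1 < p) (hσ : -(n : ℝ) < σ)
    (hpβ : 0 < p * β) (hpβσ : p * β + σ < 0) :
    ∃ K : ℝ≥0∞, K ≠ 0 ∧ K ≠ ∞ ∧ ∀ x : EuclideanSpace ℝ (Fin n), x ≠ 0 →
      wolff n β p (fun y => ‖y‖ ^ σ) x = ENNReal.ofReal (‖x‖ ^ ((p * β + σ) / (p - 1))) * K := by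
  have : Nonempty (Fin n) := ⟨⟨0, hn⟩⟩
  obtain ⟨x₀, hx₀⟩ := exists_norm_eq (EuclideanSpace ℝ (Fin n)) zero_le_one
  refine ⟨_, (wolff_norm_rpow_pos hn hp.le x₀).ne', wolff_norm_rpow_ne_top hp hσ hpβ hpβσ hx₀,
    fun x hx => ?_⟩
  rw [wolff_norm_rpow_eq_norm_rpow_mul hp.le hx hx₀, ENNReal.ofReal_rpow_of_nonneg
    (by positivity) (one_div_nonneg.2 (sub_nonneg.2 hp.le)), ← Real.rpow_mul (norm_nonneg x),
    mul_one_div]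

end WolffNormRpow

theorem slow_rate_exponent_bounds {n p β a q t : ℝ} (hp : 1 < p) (ha : -a < p * β) (hβn : p * β < n)
    (hq : (n + a) * (p - 1) / (n - p * β) < q) (ht : t = (p * β + a) / (q - p + 1)) :
    0 < t ∧ 0 < q ∧ -n < a - t * q ∧ p * β + (a - t * q) = -(t * (p - 1)) := by
  have hq' : (n + a) * (p - 1) < q * (n - p * β) := by rwa [div_lt_iff₀ (by linarith)] at hq
  have hqp : 0 < q - p + 1 := by nlinarith
  have hts : t * (q - p + 1) = p * β + a := by rw [ht]; field_simp
  have ht0 : 0 < t := by rw [ht]; exact div_pos (by linarith) hqp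
  refine ⟨ht0, by linarith, ?_, by linarith⟩
  nlinarith

-- At `r = 0` the identity holds only through `Real.zero_rpow` (`0 ^ x = 0` for `x ≠ 0`).
theorem rpow_mul_mul_rpow_neg_rpow {r a c t q : ℝ} (hr : 0 ≤ r) (hc : 0 ≤ c) (ht : t ≠ 0)
    (hq : q ≠ 0) (hσ : a - t * q ≠ 0) :
    r ^ a * (c * r ^ (-t)) ^ q = c ^ q * r ^ (a - t * q) := by
  rcases hr.eq_or_lt with rfl | hr
  · rw [Real.zero_rpow (neg_ne_zero.2 ht), mul_zero, Real.zero_rpow hq, mul_zero,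
      Real.zero_rpow hσ, mul_zero]
  rw [Real.mul_rpow hc (by positivity), ← Real.rpow_mul hr.le, mul_left_comm, ← Real.rpow_add hr]
  ring_nf

theorem exists_wolff_norm_rpow_mul_rpow_eq_mul {n : ℕ} {p β a q t c : ℝ} (hn : 0 < n) (hp : 1 < p)
    (hβ : 0 < β) (ha : -a < p * β) (hβn : p * β < n) (hq : (n + a) * (p - 1) / (n - p * β) < q)
    (ht : t = (p * β + a) / (q - p + 1)) (hc : 0 < c) :
    ∃ C : ℝ≥0∞, C ≠ 0 ∧ C ≠ ∞ ∧ ∀ x : EuclideanSpace ℝ (Fin n), x ≠ 0 →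
      wolff n β p (fun y => ‖y‖ ^ a * (c * ‖y‖ ^ (-t)) ^ q) x
        = ENNReal.ofReal (‖x‖ ^ (-t)) * C := by
  obtain ⟨ht0, hq0, hσn, hexp⟩ := slow_rate_exponent_bounds hp ha hβn hq ht
  have hpβ : 0 < p * β := mul_pos (by linarith) hβ
  have htp : 0 < t * (p - 1) := mul_pos ht0 (by linarith)
  have hf : (fun y : EuclideanSpace ℝ (Fin n) => ‖y‖ ^ a * (c * ‖y‖ ^ (-t)) ^ q)
      = fun y => c ^ q * ‖y‖ ^ (a - t * q) := funext fun y =>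
    rpow_mul_mul_rpow_neg_rpow (norm_nonneg y) hc.le ht0.ne' hq0.ne' (by linarith)
  obtain ⟨K, hK0, hKtop, hW⟩ :=
    exists_wolff_norm_rpow_eq_mul (β := β) hn hp hσn hpβ (by linarith)
  refine ⟨ENNReal.ofReal (c ^ q) ^ (1 / (p - 1)) * K, ?_, ?_, fun x hx => ?_⟩
  · exact mul_ne_zero (ENNReal.rpow_pos (ENNReal.ofReal_pos.2 (by positivity))
      ENNReal.ofReal_ne_top).ne' hK0
  · exact ENNReal.mul_ne_top (ENNReal.rpow_ne_top_of_nonneg (one_div_nonneg.2 (by linarith))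
      ENNReal.ofReal_ne_top) hKtop
  rw [hf, wolff_const_mul hp.le (by positivity), hW x hx, hexp, neg_div,
    mul_div_cancel_right₀ _ (by linarith : p - 1 ≠ 0)]
  ring

theorem stmt5_singular_solution_general
    (n : ℕ) (hn : 3 ≤ n) (p β a q : ℝ)
    (hp1 : 1 < p) (hβ : 0 < β)
    (ha : -a < p * β) (hβn : p * β < n)
    (hq2 : (n + a) * (p - 1) / (n - p * β) < q)
    (t c : ℝ) (ht : t = (p * β + a) / (q - p + 1)) (hc : 0 < c) :
    (∀ x : EuclideanSpace ℝ (Fin n), x ≠ 0 →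
      wolff n β p (fun y => ‖y‖ ^ a * (c * ‖y‖ ^ (-t)) ^ q) x ≠ ∞ ∧
      0 < wolff n β p (fun y => ‖y‖ ^ a * (c * ‖y‖ ^ (-t)) ^ q) x) ∧
    ∃ c₁ c₂ : ℝ, 0 < c₁ ∧ c₁ ≤ c₂ ∧
      ∀ x : EuclideanSpace ℝ (Fin n), x ≠ 0 →
        c₁ * (wolff n β p (fun y => ‖y‖ ^ a * (c * ‖y‖ ^ (-t)) ^ q) x).toReal
            ≤ c * ‖x‖ ^ (-t) ∧
        c * ‖x‖ ^ (-t)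
            ≤ c₂ * (wolff n β p (fun y => ‖y‖ ^ a * (c * ‖y‖ ^ (-t)) ^ q) x).toReal := by
  obtain ⟨C, hC0, hCtop, hW⟩ :=
    exists_wolff_norm_rpow_mul_rpow_eq_mul (by omega) hp1 hβ ha hβn hq2 ht hc
  have hC : 0 < C.toReal := ENNReal.toReal_pos hC0 hCtop
  refine ⟨fun x hx => ?_, c / C.toReal, c / C.toReal, div_pos hc hC, le_rfl, fun x hx => ?_⟩
  · rw [hW x hx]
    exact ⟨ENNReal.mul_ne_top ENNReal.ofReal_ne_top hCtop,
      ENNReal.mul_pos (ENNReal.ofReal_pos.2 (by positivity)).ne' hC0⟩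
  · have : c / C.toReal * (wolff n β p (fun y => ‖y‖ ^ a * (c * ‖y‖ ^ (-t)) ^ q) x).toReal
        = c * ‖x‖ ^ (-t) := by
      rw [hW x hx, ENNReal.toReal_mul, ENNReal.toReal_ofReal (by positivity)]
      field_simp
    exact ⟨this.le, this.ge⟩

/-- `u(x) = c|x|^{-t}` with the slow rate `t = (pβ+a)/(q-p+1)` solves the
integral equation with some double bounded `R` on `ℝⁿ \ {0}`: its Wolff potential is
finite and positive there, and comparable to `u`. -/
theorem stmt5_singular_solution
    (n : ℕ) (hn : 3 ≤ n) (p β a q : ℝ)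
    (hp1 : 1 < p) (hp2 : p ≤ 2) (hβ : 0 < β)
    (ha0 : 0 ≤ -a) (ha : -a < p * β) (hβn : p * β < n)
    (hq2 : (n + a) * (p - 1) / (n - p * β) < q)
    (t c : ℝ) (ht : t = (p * β + a) / (q - p + 1)) (hc : 0 < c) :
    (∀ x : EuclideanSpace ℝ (Fin n), x ≠ 0 →
      wolff n β p (fun y => ‖y‖ ^ a * (c * ‖y‖ ^ (-t)) ^ q) x ≠ ∞ ∧
      0 < wolff n β p (fun y => ‖y‖ ^ a * (c * ‖y‖ ^ (-t)) ^ q) x) ∧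
    ∃ c₁ c₂ : ℝ, 0 < c₁ ∧ c₁ ≤ c₂ ∧
      ∀ x : EuclideanSpace ℝ (Fin n), x ≠ 0 →
        c₁ * (wolff n β p (fun y => ‖y‖ ^ a * (c * ‖y‖ ^ (-t)) ^ q) x).toReal
            ≤ c * ‖x‖ ^ (-t) ∧
        c * ‖x‖ ^ (-t)
            ≤ c₂ * (wolff n β p (fun y => ‖y‖ ^ a * (c * ‖y‖ ^ (-t)) ^ q) x).toReal :=
  stmt5_singular_solution_general n hn p β a q hp1 hβ ha hβn hq2 t c ht hc
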